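/- arXiv:1407.2696 — 4 statements merged into one kernel-verified Lean document; each statement's English description precedes it below -/
import Mathlib

section
/- Let n ≥ 3 be an integer, m = (n-2)/(n+2), and α, β ∈ ℝ. Let v be a radially symmetric solution of Δv^m + αv + βx·∇v = 0, v > 0, in ℝ^n∖{0}, and define w(ρ) = ρ^{-(n-2)/m} v(1/ρ) for ρ > 0. Then w is a radially symmetric solution of Δw^m + α'w + β'x·∇w = 0, w > 0, in ℝ^n∖{0}, where α' = α − ((n-2)/m)β and β' = −β. Moreover, if α = (2β+ρ₁)/(1-m) for some constant ρ₁ > 0, then α' = (2β'+ρ₁)/(1-m); and if β ≠ 0, then r^{α/β} v(r) = ρ^{α'/β'} w(ρ) for all r = 1/ρ > 0. -/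
open Real Filter Set

noncomputable section

/-- A radially symmetric solution of `Δ v^m + α v + β x·∇v = 0`, `v > 0`, in `ℝⁿ \ {0}`,
identified with a smooth positive function on `(0,∞)` satisfying the radial ODE. -/
def IsSingularSolution (n : ℕ) (m α β : ℝ) (g : ℝ → ℝ) : Prop :=
  (∀ r > 0, 0 < g r) ∧ ContDiffOn ℝ (⊤ : ℕ∞) g (Ioi 0) ∧
    ∀ r > 0,
      deriv (deriv (fun x => g x ^ m)) r
        + (((n : ℝ) - 1) / r) * deriv (fun x => g x ^ m) r
        + α * g r + β * r * deriv g r = 0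

/-! With `f = v ^ m`, the relation `m (n + 2) = n - 2` makes `w ^ m (ρ) = ρ ^ (2 - n) f (1 / ρ)`
the Kelvin transform of `f`, whose radial Laplacian is `ρ ^ (-n - 2) (Δf)(1 / ρ)`. The same weight
turns `v (1 / ρ)` into `w ρ`, and `ρ w' = -(n + 2) w - ρ ^ (-n - 2) (r v')(1 / ρ)` converts the
drift term, which gives the equation for `w` with `α' = α - (n + 2) β` and `β' = -β`. -/

open Topology

def radialLaplacian (n : ℝ) (f : ℝ → ℝ) (r : ℝ) : ℝ :=
  deriv (deriv f) r + (n - 1) / r * deriv f r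

def radialInversion (a : ℝ) (g : ℝ → ℝ) (ρ : ℝ) : ℝ :=
  ρ ^ a * g ρ⁻¹

lemma radialLaplacian_congr {n r : ℝ} {f g : ℝ → ℝ} (h : f =ᶠ[𝓝 r] g) :
    radialLaplacian n f r = radialLaplacian n g r := by
  rw [radialLaplacian, radialLaplacian, h.deriv.deriv_eq, h.deriv_eq]

namespace radialInversion

variable {a : ℝ} {g : ℝ → ℝ}

lemma hasDerivAt {g' ρ : ℝ} (hρ : ρ ≠ 0) (hg : HasDerivAt g g' ρ⁻¹) :
    HasDerivAt (radialInversion a g) (ρ ^ a * (a * ρ⁻¹ * g ρ⁻¹ - ρ⁻¹ ^ 2 * g')) ρ := by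
  refine ((hasDerivAt_rpow_const (p := a) (Or.inl hρ)).mul
    (hg.comp ρ (hasDerivAt_inv hρ))).congr_deriv ?_
  rw [rpow_sub_one hρ, Function.comp_apply]
  field_simp
  ring

lemma eqOn_deriv (hg : ∀ r > 0, DifferentiableAt ℝ g r) :
    EqOn (deriv (radialInversion a g))
      (radialInversion a fun r => a * r * g r - r ^ 2 * deriv g r) (Ioi 0) := fun ρ hρ =>
  ((hasDerivAt (ne_of_gt hρ) (hg _ (inv_pos.2 hρ)).hasDerivAt).deriv).trans (by
    simp only [radialInversion])

lemma contDiffOn {k : WithTop ℕ∞} (hg : ContDiffOn ℝ k g (Ioi 0)) :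
    ContDiffOn ℝ k (radialInversion a g) (Ioi 0) :=
  (contDiffOn_id.rpow_const_of_ne fun _ hx => ne_of_gt hx).mul
    (hg.comp ((contDiffOn_inv ℝ).mono fun _ hx => ne_of_gt hx) fun _ hx =>
      inv_pos.2 (mem_Ioi.1 hx))

lemma rpow_eq {m ρ : ℝ} (hρ : 0 < ρ) (hg : 0 ≤ g ρ⁻¹) :
    radialInversion a g ρ ^ m = radialInversion (a * m) (fun r => g r ^ m) ρ := by
  rw [radialInversion, radialInversion, mul_rpow (rpow_nonneg hρ.le _) hg, rpow_mul hρ.le]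

end radialInversion

theorem radialLaplacian_radialInversion {n ρ : ℝ} {f : ℝ → ℝ}
    (hf : ∀ r > 0, DifferentiableAt ℝ f r) (hf' : ∀ r > 0, DifferentiableAt ℝ (deriv f) r)
    (hρ : 0 < ρ) :
    radialLaplacian n (radialInversion (2 - n) f) ρ =
      radialInversion (-n - 2) (radialLaplacian n f) ρ := by
  have hr : 0 < ρ⁻¹ := inv_pos.2 hρ
  set h := fun r => (2 - n) * r * f r - r ^ 2 * deriv f r
  have hh : HasDerivAt h ((2 - n) * f ρ⁻¹ + (2 - n) * ρ⁻¹ * deriv f ρ⁻¹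
      - (2 * ρ⁻¹ * deriv f ρ⁻¹ + ρ⁻¹ ^ 2 * deriv (deriv f) ρ⁻¹)) ρ⁻¹ := by
    refine HasDerivAt.congr_deriv (f := h)
      ((((hasDerivAt_id ρ⁻¹).const_mul (2 - n)).mul (hf _ hr).hasDerivAt).sub
        ((hasDerivAt_pow 2 ρ⁻¹).mul (hf' _ hr).hasDerivAt)) ?_
    simp only [id, Nat.cast_ofNat]
    ring
  have hderiv : deriv (radialInversion (2 - n) f) =ᶠ[𝓝 ρ] radialInversion (2 - n) h :=
    Filter.eventuallyEq_of_mem (isOpen_Ioi.mem_nhds hρ) (radialInversion.eqOn_deriv hf)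
  have hpow : ρ ^ (-n - 2) = ρ ^ (2 - n) * ρ⁻¹ ^ 4 := by
    rw [show -n - 2 = 2 - n + (-4 : ℤ) by push_cast; ring, rpow_add hρ, rpow_intCast, zpow_neg,
      inv_pow]
    norm_num
  rw [radialLaplacian, hderiv.deriv_eq, (radialInversion.hasDerivAt hρ.ne' hh).deriv,
    radialInversion.eqOn_deriv hf hρ]
  simp only [radialInversion, radialLaplacian, h, hpow]
  field_simp
  ring

theorem isSingularSolution_radialInversion {n : ℕ} {m α β : ℝ} {v : ℝ → ℝ}
    (hm : m * (n + 2) = n - 2) (hv : IsSingularSolution n m α β v) :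
    IsSingularSolution n m (α - (n + 2) * β) (-β) (radialInversion (-(n + 2)) v) := by
  obtain ⟨hpos, hsmooth, hode⟩ := hv
  have hdiff {g : ℝ → ℝ} {k : WithTop ℕ∞} (hg : ContDiffOn ℝ k g (Ioi 0)) (hk : k ≠ 0) :
      ∀ r > 0, DifferentiableAt ℝ g r := fun r hr =>
    (hg.contDiffAt (isOpen_Ioi.mem_nhds hr)).differentiableAt hk
  have hf : ContDiffOn ℝ (⊤ : ℕ∞) (fun r => v r ^ m) (Ioi 0) :=
    hsmooth.rpow_const_of_ne fun r hr => (hpos r hr).ne'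
  have hf' : ContDiffOn ℝ 1 (deriv fun r => v r ^ m) (Ioi 0) :=
    hf.deriv_of_isOpen isOpen_Ioi (WithTop.coe_le_coe.2 le_top)
  refine ⟨fun ρ hρ => mul_pos (rpow_pos_of_pos hρ _) (hpos _ (inv_pos.2 hρ)),
    radialInversion.contDiffOn hsmooth, fun ρ hρ => ?_⟩
  have hpow : (fun ρ => radialInversion (-(n + 2)) v ρ ^ m) =ᶠ[𝓝 ρ]
      radialInversion (2 - n) fun r => v r ^ m :=
    eventuallyEq_of_mem (isOpen_Ioi.mem_nhds hρ) fun x hx => by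
      rw [radialInversion.rpow_eq hx (hpos _ (inv_pos.2 hx)).le,
        show -((n : ℝ) + 2) * m = 2 - n by linear_combination -hm]
  have hlap : radialLaplacian n (fun r => v r ^ m) ρ⁻¹ =
      -α * v ρ⁻¹ - β * ρ⁻¹ * deriv v ρ⁻¹ := by
    rw [radialLaplacian]
    linarith [hode ρ⁻¹ (inv_pos.2 hρ)]
  change radialLaplacian n (fun x => radialInversion (-(n + 2)) v x ^ m) ρ + _ + _ = 0
  rw [radialLaplacian_congr hpow,
    radialLaplacian_radialInversion (hdiff hf (by simp)) (hdiff hf' one_ne_zero) hρ,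
    (radialInversion.hasDerivAt hρ.ne'
      (hdiff hsmooth (by simp) _ (inv_pos.2 hρ)).hasDerivAt).deriv]
  simp only [radialInversion, hlap, neg_add']
  field_simp
  ring

lemma rpow_mul_radialInversion_inv {k α β r : ℝ} (v : ℝ → ℝ) (hβ : β ≠ 0) (hr : 0 < r) :
    r⁻¹ ^ ((α - k * β) / -β) * radialInversion (-k) v r⁻¹ = r ^ (α / β) * v r := by
  rw [radialInversion, inv_inv, ← mul_assoc, ← rpow_add (inv_pos.2 hr), inv_rpow hr.le,
    ← rpow_neg hr.le]
  congr 2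
  field_simp
  ring

/-- the inversion formula. For `m = (n-2)/(n+2)`, if `v` is a radially
symmetric solution of the elliptic equation in `ℝⁿ \ {0}` with parameters `(α,β)`,
then `w(ρ) = ρ^{-(n-2)/m} v(1/ρ)` is a solution with parameters
`α' = α − ((n-2)/m)β`, `β' = −β`; if `α = (2β+ρ₁)/(1-m)` then `α' = (2β'+ρ₁)/(1-m)`;
and if `β ≠ 0` then `r^{α/β} v(r) = ρ^{α'/β'} w(ρ)` for `r = 1/ρ > 0`. -/
theorem stmt5 (n : ℕ) (m α β : ℝ)
    (hn : 3 ≤ n) (hm : m = ((n : ℝ) - 2) / ((n : ℝ) + 2))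
    (v : ℝ → ℝ)
    (hv : IsSingularSolution n m α β v) :
    IsSingularSolution n m (α - ((n : ℝ) - 2) / m * β) (-β)
        (fun ρ => ρ ^ (-(((n : ℝ) - 2) / m)) * v (1 / ρ)) ∧
      (∀ ρ₁ > 0, α = (2 * β + ρ₁) / (1 - m) →
        α - ((n : ℝ) - 2) / m * β = (2 * (-β) + ρ₁) / (1 - m)) ∧
      (β ≠ 0 → ∀ r > 0,
        r ^ (α / β) * v r =
          (1 / r) ^ ((α - ((n : ℝ) - 2) / m * β) / (-β)) *
            ((1 / r) ^ (-(((n : ℝ) - 2) / m)) * v (1 / (1 / r)))) := by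
  have hn2 : (n : ℝ) - 2 ≠ 0 := by
    have : (3 : ℝ) ≤ n := by exact_mod_cast hn
    linarith
  have hn2' : (n : ℝ) + 2 ≠ 0 := by positivity
  have hk : ((n : ℝ) - 2) / m = n + 2 := by rw [hm, div_div_cancel₀ hn2]
  have hmk : m * (n + 2) = n - 2 := by rw [hm, div_mul_cancel₀ _ hn2']
  rw [hk]
  refine ⟨?_, fun ρ₁ _ hα => ?_, fun hβ r hr => ?_⟩
  · simp only [one_div]
    exact isSingularSolution_radialInversion hmk hv
  · have h1m : 1 - m = 4 / (n + 2) := by rw [hm]; field_simp; ring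
    rw [hα, h1m]
    field_simp
    ring
  · simpa only [radialInversion, one_div, inv_inv] using
      (rpow_mul_radialInversion_inv v hβ hr).symm
end
end

section
/- Let n ≥ 3 be an integer, 0 < m < (n-2)/n, ρ₁ > 0, λ > 0, β > β₁ = ρ₁/(n-2-nm) and α = (2β+ρ₁)/(1-m). Let g_λ be a radially symmetric solution of Δv^m + αv + βx·∇v = 0, v > 0, in ℝ^n∖{0} satisfying lim_{r→0+} r^{α/β} g_λ(r) = λ^{-ρ₁/((1-m)β)}. Then the function ρ ↦ g_λ(ρ)ρ^{n-1} is integrable on (0,r) for every r > 0, and r^{n-1}(g_λ^m)'(r) + β r^n g_λ(r) = (nβ − α) ∫₀^r g_λ(ρ) ρ^{n-1} dρ for all r > 0. -/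
/-!
The flux `F(r) = r^{n-1} (g^m)'(r) + β rⁿ g(r)` satisfies `F' = (nβ - α) g(r) r^{n-1}` by the
radial equation, so it is nondecreasing when `α < nβ`, and the identity is the fundamental
theorem of calculus on `(0, r]` once `F(0+) = 0`. The blow-up rate `g(r) ~ C r^{-α/β}` with
`α/β < n` and `m α/β < n - 2` gives `rⁿ g(r) → 0` and `r^{n-2} g(r)^m → 0`. If `F` stayed
below some `c < 0` (resp. above `c > 0`) near `0`, integrating `(g^m)' ≤ c r^{1-n}` (resp. `≥`)
would force `r^{n-2} g(r)^m` to tend to a limit `≥ -c/(n-2) > 0` (resp. to become negative).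
-/

open Real Filter Set MeasureTheory

noncomputable section

open scoped Topology

theorem nonneg_of_rpow_mul_deriv_le {h h' : ℝ → ℝ} {p a c : ℝ} (hp : 0 < p) (ha : 0 < a)
    (hh : ∀ x ∈ Ioc 0 a, HasDerivAt h (h' x) x) (hle : ∀ x ∈ Ioc 0 a, x ^ (p + 1) * h' x ≤ c)
    (hlim : Tendsto (fun r => r ^ p * h r) (𝓝[>] 0) (𝓝 0)) : 0 ≤ c := by
  set φ : ℝ → ℝ := fun x => h x + c / p * x ^ (-p)
  have hφ : ∀ x ∈ Ioc 0 a, HasDerivAt φ (h' x - c * x ^ (-p - 1)) x := by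
    intro x hx
    refine ((hh x hx).add
      ((hasDerivAt_rpow_const (Or.inl hx.1.ne')).const_mul (c / p))).congr_deriv ?_
    field_simp
    ring
  have hanti : AntitoneOn φ (Ioc 0 a) := by
    refine antitoneOn_of_hasDerivWithinAt_nonpos (f' := fun x => h' x - c * x ^ (-p - 1))
      (convex_Ioc 0 a)
      (fun x hx => (hφ x hx).continuousAt.continuousWithinAt) ?_ ?_ <;> rw [interior_Ioc]
    · exact fun x hx => (hφ x (Ioo_subset_Ioc_self hx)).hasDerivWithinAt
    · intro x hx
      have hxp : 0 < x ^ (p + 1) := rpow_pos_of_pos hx.1 _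
      rw [show -p - 1 = -(p + 1) by ring, rpow_neg hx.1.le, sub_nonpos, ← div_eq_mul_inv,
        le_div_iff₀ hxp, mul_comm]
      exact hle x (Ioo_subset_Ioc_self hx)
  have hbound : ∀ᶠ r in 𝓝[>] 0, r ^ p * φ a - c / p ≤ r ^ p * h r := by
    filter_upwards [Ioo_mem_nhdsGT ha] with r hr
    have hrp : r ^ p * r ^ (-p) = 1 := by rw [← rpow_add hr.1]; simp
    have hφr := mul_le_mul_of_nonneg_left (hanti ⟨hr.1, hr.2.le⟩ ⟨ha, le_rfl⟩ hr.2.le)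
      (rpow_nonneg hr.1.le p)
    calc r ^ p * φ a - c / p ≤ r ^ p * φ r - c / p := by linarith
      _ = r ^ p * h r + c / p * (r ^ p * r ^ (-p)) - c / p := by ring
      _ = r ^ p * h r := by rw [hrp]; ring
  have hpow : Tendsto (fun r : ℝ => r ^ p) (𝓝[>] 0) (𝓝 0) := by
    simpa [zero_rpow hp.ne'] using
      ((continuousAt_rpow_const 0 p (Or.inr hp.le)).tendsto).mono_left nhdsWithin_le_nhds
  have := le_of_tendsto_of_tendsto ((hpow.mul_const (φ a)).sub_const (c / p)) hlim hbound
  rw [zero_mul, zero_sub, neg_nonpos] at this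
  simpa using (le_div_iff₀ hp).mp this

theorem nonpos_of_le_rpow_mul_deriv {h h' : ℝ → ℝ} {p a c : ℝ} (hp : 0 < p) (ha : 0 < a)
    (hh : ∀ x ∈ Ioc 0 a, HasDerivAt h (h' x) x) (hle : ∀ x ∈ Ioc 0 a, c ≤ x ^ (p + 1) * h' x)
    (hlim : Tendsto (fun r => r ^ p * h r) (𝓝[>] 0) (𝓝 0)) : c ≤ 0 := by
  have := nonneg_of_rpow_mul_deriv_le (h := -h) (h' := -h') (c := -c) hp ha
    (fun x hx => (hh x hx).neg) (fun x hx => by simpa using hle x hx)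
    (by simpa using hlim.neg)
  linarith

theorem tendsto_rpow_mul_nhdsGT_zero_of_lt {f : ℝ → ℝ} {q s A : ℝ}
    (hf : Tendsto (fun r => r ^ q * f r) (𝓝[>] 0) (𝓝 A)) (hqs : q < s) :
    Tendsto (fun r => r ^ s * f r) (𝓝[>] 0) (𝓝 0) := by
  have hpow : Tendsto (fun r : ℝ => r ^ (s - q)) (𝓝[>] 0) (𝓝 0) := by
    simpa [zero_rpow (sub_pos.mpr hqs).ne'] using
      ((continuousAt_rpow_const 0 _ (Or.inr (sub_pos.mpr hqs).le)).tendsto).mono_left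
        nhdsWithin_le_nhds
  refine (zero_mul A ▸ hpow.mul hf).congr' ?_
  filter_upwards [self_mem_nhdsWithin] with r (hr : 0 < r)
  rw [← mul_assoc, ← rpow_add hr, sub_add_cancel]

theorem Filter.Tendsto.rpow_mul_rpow_const {f : ℝ → ℝ} {q A m : ℝ}
    (hf : Tendsto (fun r => r ^ q * f r) (𝓝[>] 0) (𝓝 A)) (hpos : ∀ r > 0, 0 ≤ f r) (hm : 0 ≤ m) :
    Tendsto (fun r => r ^ (m * q) * f r ^ m) (𝓝[>] 0) (𝓝 (A ^ m)) := by
  refine (hf.rpow_const (Or.inr hm)).congr' ?_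
  filter_upwards [self_mem_nhdsWithin] with r (hr : 0 < r)
  rw [mul_rpow (rpow_nonneg hr.le _) (hpos r hr), ← rpow_mul hr.le, mul_comm q]

theorem integrableOn_Ioc_and_integral_eq_sub_of_tendsto {F f : ℝ → ℝ} {a b L : ℝ} (hab : a < b)
    (hF : ∀ x ∈ Ioc a b, HasDerivAt F (f x) x) (hf : ∀ x ∈ Ioo a b, 0 ≤ f x)
    (hL : Tendsto F (𝓝[>] a) (𝓝 L)) :
    IntegrableOn f (Ioc a b) ∧ ∫ x in Ioc a b, f x = F b - L := by
  classical
  set G := Function.update F a L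
  have hGF : ∀ x ∈ Ioc a b, G =ᶠ[𝓝 x] F := fun x hx =>
    (eventually_ne_nhds hx.1.ne').mono fun y hy => Function.update_of_ne hy _ _
  have hG : ∀ x ∈ Ioo a b, HasDerivAt G (f x) x := fun x hx =>
    (hF x (Ioo_subset_Ioc_self hx)).congr_of_eventuallyEq (hGF x (Ioo_subset_Ioc_self hx))
  have hGcont : ContinuousOn G (Icc a b) := by
    intro x hx
    rcases eq_or_lt_of_le hx.1 with rfl | hax
    · exact continuousWithinAt_update_same.mpr
        (hL.mono_left (nhdsWithin_mono _ fun y hy => lt_of_le_of_ne hy.1.1 (Ne.symm hy.2)))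
    · exact ((hF x ⟨hax, hx.2⟩).continuousAt.congr (hGF x ⟨hax, hx.2⟩).symm).continuousWithinAt
  have hint := intervalIntegral.integrableOn_deriv_of_nonneg hGcont hG hf
  refine ⟨hint, ?_⟩
  rw [← intervalIntegral.integral_of_le hab.le, intervalIntegral.integral_eq_sub_of_hasDerivAt_of_le
    hab.le hGcont hG ((intervalIntegrable_iff_integrableOn_Ioc_of_le hab.le).mpr hint)]
  simp [G, hab.ne']

def radialFlux (n : ℕ) (m β : ℝ) (g : ℝ → ℝ) (r : ℝ) : ℝ :=
  r ^ ((n : ℝ) - 1) * deriv (fun x => g x ^ m) r + β * r ^ (n : ℝ) * g r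

namespace IsSingularSolution

variable {n : ℕ} {m α β : ℝ} {g : ℝ → ℝ} {r : ℝ}

theorem hasDerivAt (hg : IsSingularSolution n m α β g) (hr : 0 < r) :
    HasDerivAt g (deriv g r) r :=
  (hg.2.1.differentiableOn (by simp) r hr).differentiableAt (isOpen_Ioi.mem_nhds hr) |>.hasDerivAt

theorem contDiffOn_rpow (hg : IsSingularSolution n m α β g) :
    ContDiffOn ℝ (⊤ : ℕ∞) (fun x => g x ^ m) (Ioi 0) :=
  hg.2.1.rpow_const_of_ne fun x hx => (hg.1 x hx).ne'

theorem hasDerivAt_rpow (hg : IsSingularSolution n m α β g) (hr : 0 < r) :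
    HasDerivAt (fun x => g x ^ m) (deriv (fun x => g x ^ m) r) r :=
  (hg.contDiffOn_rpow.differentiableOn (by simp) r hr).differentiableAt
    (isOpen_Ioi.mem_nhds hr) |>.hasDerivAt

theorem hasDerivAt_deriv_rpow (hg : IsSingularSolution n m α β g) (hr : 0 < r) :
    HasDerivAt (deriv fun x => g x ^ m) (deriv (deriv fun x => g x ^ m) r) r :=
  (((contDiffOn_infty_iff_deriv_of_isOpen isOpen_Ioi).1 hg.contDiffOn_rpow).2.differentiableOn
    (by simp) r hr).differentiableAt (isOpen_Ioi.mem_nhds hr) |>.hasDerivAt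

theorem hasDerivAt_radialFlux (hg : IsSingularSolution n m α β g) (hr : 0 < r) :
    HasDerivAt (radialFlux n m β g) (((n : ℝ) * β - α) * (g r * r ^ ((n : ℝ) - 1))) r := by
  have hpow (s : ℝ) : HasDerivAt (fun x : ℝ => x ^ s) (s * r ^ (s - 1)) r :=
    hasDerivAt_rpow_const (Or.inl hr.ne')
  refine (((hpow _).mul (hg.hasDerivAt_deriv_rpow hr)).add
    (((hpow _).const_mul β).mul (hg.hasDerivAt hr))).congr_deriv ?_
  have hode : deriv (deriv fun x => g x ^ m) r = -(((n : ℝ) - 1) / r *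
      deriv (fun x => g x ^ m) r + α * g r + β * r * deriv g r) := by
    linarith [hg.2.2 r hr]
  rw [hode]
  simp only [rpow_sub_one hr.ne']
  field_simp
  ring

theorem monotoneOn_radialFlux (hg : IsSingularSolution n m α β g) (hαβ : α ≤ n * β) :
    MonotoneOn (radialFlux n m β g) (Ioi 0) :=
  monotoneOn_of_hasDerivWithinAt_nonneg (convex_Ioi 0)
    (fun _ hx => (hg.hasDerivAt_radialFlux hx).continuousAt.continuousWithinAt)
    (fun _ hx => (hg.hasDerivAt_radialFlux (interior_subset hx)).hasDerivWithinAt)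
    fun _ hx => mul_nonneg (sub_nonneg.mpr hαβ)
      (mul_nonneg (hg.1 _ (interior_subset hx)).le (rpow_nonneg (le_of_lt (interior_subset hx)) _))

theorem radialFlux_nonneg (hg : IsSingularSolution n m α β g) (hn : 2 < n) (hβ : 0 ≤ β)
    (hαβ : α ≤ n * β) (hlim : Tendsto (fun r => r ^ ((n : ℝ) - 2) * g r ^ m) (𝓝[>] 0) (𝓝 0))
    (hr : 0 < r) : 0 ≤ radialFlux n m β g r := by
  have hp : (0 : ℝ) < n - 2 := by
    rw [sub_pos]; exact_mod_cast hn
  refine nonneg_of_rpow_mul_deriv_le hp hr (fun x hx => hg.hasDerivAt_rpow hx.1)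
    (fun x hx => ?_) hlim
  have hmono := hg.monotoneOn_radialFlux hαβ hx.1 hr hx.2
  have : 0 ≤ β * x ^ (n : ℝ) * g x :=
    mul_nonneg (mul_nonneg hβ (rpow_nonneg hx.1.le _)) (hg.1 x hx.1).le
  rw [show (n : ℝ) - 2 + 1 = n - 1 by ring]
  unfold radialFlux at hmono ⊢
  linarith

theorem tendsto_radialFlux (hg : IsSingularSolution n m α β g) (hn : 2 < n) (hβ : 0 ≤ β)
    (hαβ : α ≤ n * β) (hlim : Tendsto (fun r => r ^ ((n : ℝ) - 2) * g r ^ m) (𝓝[>] 0) (𝓝 0))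
    (hlim' : Tendsto (fun r => r ^ (n : ℝ) * g r) (𝓝[>] 0) (𝓝 0)) :
    Tendsto (radialFlux n m β g) (𝓝[>] 0) (𝓝 0) := by
  have hp : (0 : ℝ) < n - 2 := by
    rw [sub_pos]; exact_mod_cast hn
  set L := sInf (radialFlux n m β g '' Ioi 0)
  have hF : Tendsto (radialFlux n m β g) (𝓝[>] 0) (𝓝 L) :=
    (hg.monotoneOn_radialFlux hαβ).tendsto_nhdsGT
      ⟨0, forall_mem_image.mpr fun _ hx => hg.radialFlux_nonneg hn hβ hαβ hlim hx⟩
  have hL : 0 ≤ L := ge_of_tendsto hF (eventually_nhdsWithin_of_forall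
      fun _ hx => hg.radialFlux_nonneg hn hβ hαβ hlim hx)
  suffices L ≤ 0 from le_antisymm this hL ▸ hF
  by_contra! hLpos
  have hG : Tendsto (fun x => radialFlux n m β g x - β * (x ^ (n : ℝ) * g x))
      (𝓝[>] 0) (𝓝 L) := by
    simpa using hF.sub (hlim'.const_mul β)
  obtain ⟨a, ha, hsub⟩ :=
    mem_nhdsGT_iff_exists_Ioc_subset.mp (hG.eventually_const_lt (half_lt_self hLpos))
  refine (half_pos hLpos).not_ge (nonpos_of_le_rpow_mul_deriv hp ha
    (fun x hx => hg.hasDerivAt_rpow hx.1) (fun x hx => ?_) hlim)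
  have : L / 2 < radialFlux n m β g x - β * (x ^ (n : ℝ) * g x) := hsub hx
  rw [show (n : ℝ) - 2 + 1 = n - 1 by ring]
  unfold radialFlux at this
  linarith

end IsSingularSolution

theorem exponent_bounds_of_gt_critical {n : ℕ} {m ρ₁ β α : ℝ} (hn : 3 ≤ n)
    (hm2 : m < ((n : ℝ) - 2) / n) (hρ : 0 < ρ₁) (hβ : β > ρ₁ / ((n : ℝ) - 2 - n * m))
    (hα : α = (2 * β + ρ₁) / (1 - m)) : 0 < β ∧ α < n * β ∧ m * α < (n - 2) * β := by
  have hn3 : (3 : ℝ) ≤ n := by exact_mod_cast hn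
  have hden : 0 < (n : ℝ) - 2 - n * m := by
    have := (lt_div_iff₀ (by linarith : (0 : ℝ) < n)).mp hm2
    linarith
  have hρβ : ρ₁ < β * ((n : ℝ) - 2 - n * m) := (div_lt_iff₀ hden).mp hβ
  have hβ0 : 0 < β := (div_pos hρ hden).trans hβ
  have hm1 : 0 < 1 - m := by nlinarith
  have hα' : α * (1 - m) = 2 * β + ρ₁ := by rw [hα, div_mul_cancel₀ _ hm1.ne']
  refine ⟨hβ0, ?_, ?_⟩ <;> nlinarith

theorem stmt8_general (n : ℕ) (m ρ₁ lam β α : ℝ)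
    (hn : 3 ≤ n) (hm : 0 < m) (hm2 : m < ((n : ℝ) - 2) / n)
    (hρ : 0 < ρ₁)
    (hβ : β > ρ₁ / ((n : ℝ) - 2 - n * m))
    (hα : α = (2 * β + ρ₁) / (1 - m))
    (g : ℝ → ℝ)
    (hg : IsSingularSolution n m α β g)
    (hlim : Tendsto (fun r => r ^ (α / β) * g r) (nhdsWithin 0 (Ioi 0))
      (nhds (lam ^ (-(ρ₁ / ((1 - m) * β)))))) :
    ∀ r > 0,
      IntegrableOn (fun ρ => g ρ * ρ ^ ((n : ℝ) - 1)) (Ioo 0 r) ∧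
      r ^ ((n : ℝ) - 1) * deriv (fun x => g x ^ m) r + β * r ^ (n : ℝ) * g r =
        ((n : ℝ) * β - α) * ∫ ρ in Ioo (0 : ℝ) r, g ρ * ρ ^ ((n : ℝ) - 1) := by
  obtain ⟨hβ0, hαβ, hmα⟩ := exponent_bounds_of_gt_critical hn hm2 hρ hβ hα
  have hlim_n := tendsto_rpow_mul_nhdsGT_zero_of_lt hlim
    ((div_lt_iff₀ hβ0).mpr (by linarith) : α / β < n)
  have hlim_m := tendsto_rpow_mul_nhdsGT_zero_of_lt
    (hlim.rpow_mul_rpow_const (fun r hr => (hg.1 r hr).le) hm.le)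
    (by rw [← mul_div_assoc, div_lt_iff₀ hβ0]; linarith : m * (α / β) < n - 2)
  intro r hr
  obtain ⟨hint, heq⟩ := integrableOn_Ioc_and_integral_eq_sub_of_tendsto hr
    (fun x hx => hg.hasDerivAt_radialFlux hx.1)
    (fun x hx => mul_nonneg (sub_nonneg.mpr hαβ.le)
      (mul_nonneg (hg.1 x hx.1).le (rpow_nonneg hx.1.le _)))
    (hg.tendsto_radialFlux hn hβ0.le hαβ.le hlim_m hlim_n)
  rw [integral_const_mul, sub_zero] at heq
  have hint' : IntegrableOn (fun ρ => g ρ * ρ ^ ((n : ℝ) - 1)) (Ioc 0 r) :=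
    (integrable_const_mul_iff (sub_ne_zero.mpr hαβ.ne').isUnit _).mp hint
  refine ⟨hint'.mono_set Ioo_subset_Ioc_self, ?_⟩
  rw [← integral_Ioc_eq_integral_Ioo, heq]
  rfl

/-- for `β > β₁`, the singular solution with the prescribed blow-up rate at
the origin satisfies the integral identity
`r^{n-1}(g^m)'(r) + β rⁿ g(r) = (nβ−α) ∫₀^r g(ρ) ρ^{n-1} dρ`. -/
theorem stmt8 (n : ℕ) (m ρ₁ lam β α : ℝ)
    (hn : 3 ≤ n) (hm : 0 < m) (hm2 : m < ((n : ℝ) - 2) / n)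
    (hρ : 0 < ρ₁) (hlam : 0 < lam)
    (hβ : β > ρ₁ / ((n : ℝ) - 2 - n * m))
    (hα : α = (2 * β + ρ₁) / (1 - m))
    (g : ℝ → ℝ)
    (hg : IsSingularSolution n m α β g)
    (hlim : Tendsto (fun r => r ^ (α / β) * g r) (nhdsWithin 0 (Ioi 0))
      (nhds (lam ^ (-(ρ₁ / ((1 - m) * β)))))) :
    ∀ r > 0,
      IntegrableOn (fun ρ => g ρ * ρ ^ ((n : ℝ) - 1)) (Ioo 0 r) ∧
      r ^ ((n : ℝ) - 1) * deriv (fun x => g x ^ m) r + β * r ^ (n : ℝ) * g r =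
        ((n : ℝ) * β - α) * ∫ ρ in Ioo (0 : ℝ) r, g ρ * ρ ^ ((n : ℝ) - 1) :=
  stmt8_general n m ρ₁ lam β α hn hm hm2 hρ hβ hα g hg hlim
end
end

section
/- Let n ≥ 3 be an integer, 0 < m < (n-2)/n, ρ₁ > 0, β ≥ β₁ = ρ₁/(n-2-nm) and α = (2β+ρ₁)/(1-m). (i) If λ₂ > λ₁ > 0 and v_{λ₁}, v_{λ₂} are radially symmetric solutions of Δv^m + αv + βx·∇v = 0, v > 0, in ℝ^n with v_{λ_i}(0) = λ_i, then v_{λ₁}(r) < v_{λ₂}(r) for all r ≥ 0. (ii) If λ > 0, v_λ is a radially symmetric solution in ℝ^n with v_λ(0) = λ, and g_λ is a radially symmetric solution in ℝ^n∖{0} with lim_{r→0+} r^{α/β} g_λ(r) = λ^{-ρ₁/((1-m)β)}, then v_λ(r) < (C_*/r²)^{1/(1-m)} < g_λ(r) for all r > 0, where C_* = 2m(n-2-nm)/((1-m)ρ₁). -/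
/-!
In divergence form the radial equation reads `F(u)' = (nβ - α) r^(n-1) u` for the flux
`F(u) = r^(n-1) (u^m)' + β r^n u`, and `nβ - α = (n - 2/(1-m)) (β - β₁) ≥ 0`. The profile
`U = (C_*/r²)^(1/(1-m))` is an explicit singular solution with `F(U) = (β - β₁) r^n U`. The
behaviour of `g_λ` at the origin gives `r^(n-2) g_λ^m → 0`, which together with the monotonicity of
`F(g_λ)` forces `F(g_λ) ≥ 0`; for regular solutions `F(v_λ) → 0` at the origin.

For `β > β₁` solutions are compared through their fluxes: if `u₁ < u₂` near `0`, `F(u₁) → 0` and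
`F(u₂) ≥ 0`, then up to a first contact point `r₀` the difference `F(u₂) - F(u₁)` is strictly
increasing, hence positive at `r₀`, which forces `u₂'(r₀) > u₁'(r₀)`, impossible at a first
contact. This orders `v_λ₁ < v_λ₂`, `v_λ < U` and `U < g_λ`.

For `β = β₁` the flux is constant and the equation integrates once more:
`(1-m)β/(2m) r² - u^(m-1)` has derivative `(1-m)/m · F(u) / (r^(n-1) u)`. Hence
`v_λ^(m-1) = λ^(m-1) + r²/C_*`, while `U^(m-1) - g_λ^(m-1)` is nondecreasing with limit `0`, so a
contact `g_λ(r) = U(r)` would give `g_λ = U` on `(0, r]`, contradicting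
`r^(α/β) g_λ → λ^(-ρ₁/((1-m)β)) > 0` because `r^(α/β) U → 0`.
-/

open Real Filter Set

noncomputable section

/-- A radially symmetric solution of `Δ v^m + α v + β x·∇v = 0`, `v > 0`, in `ℝⁿ`
with `v(0) = lam`. -/
def IsRegularSolution (n : ℕ) (m α β lam : ℝ) (v : ℝ → ℝ) : Prop :=
  ContinuousOn v (Ici 0) ∧ (∀ r, 0 ≤ r → 0 < v r) ∧
    ContDiffOn ℝ (⊤ : ℕ∞) v (Ioi 0) ∧ v 0 = lam ∧
    Tendsto (fun r => r ^ ((n : ℝ) - 1) * deriv (fun x => v x ^ m) r)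
      (nhdsWithin 0 (Ioi 0)) (nhds 0) ∧
    ∀ r > 0,
      deriv (deriv (fun x => v x ^ m)) r
        + (((n : ℝ) - 1) / r) * deriv (fun x => v x ^ m) r
        + α * v r + β * r * deriv v r = 0

open Topology

theorem tendsto_rpow_nhdsGT_zero {e : ℝ} (he : 0 < e) :
    Tendsto (fun x : ℝ => x ^ e) (𝓝[>] 0) (𝓝 0) := by
  have h := (Real.continuousAt_rpow_const 0 e (Or.inr he.le)).tendsto
  rw [Real.zero_rpow he.ne'] at h
  exact h.mono_left nhdsWithin_le_nhds

theorem HasDerivAt.nonpos_of_eventually_lt_left {f : ℝ → ℝ} {f' x : ℝ} (hf : HasDerivAt f f' x)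
    (h : ∀ᶠ y in 𝓝[<] x, f x < f y) : f' ≤ 0 := by
  have hslope : Tendsto (slope f x) (𝓝[<] x) (𝓝 f') :=
    (hasDerivWithinAt_iff_tendsto_slope' (s := Iio x) (lt_irrefl x)).mp hf.hasDerivWithinAt
  refine le_of_tendsto hslope ?_
  filter_upwards [h, self_mem_nhdsWithin] with y hy (hyx : y < x)
  rw [slope_def_field]
  exact (div_neg_of_pos_of_neg (sub_pos.mpr hy) (sub_neg.mpr hyx)).le

theorem exists_first_zero {f : ℝ → ℝ} (hf : ContinuousOn f (Ioi 0))
    (h0 : ∀ᶠ r in 𝓝[>] 0, 0 < f r) {r₁ : ℝ} (hr₁ : 0 < r₁) (hf₁ : f r₁ ≤ 0) :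
    ∃ r₀ > 0, f r₀ = 0 ∧ ∀ r ∈ Ioo 0 r₀, 0 < f r := by
  obtain ⟨δ, hδ, hfδ⟩ := (nhdsGT_basis (0 : ℝ)).eventually_iff.mp h0
  obtain ⟨d, hd, hdδ, hdr₁⟩ : ∃ d, 0 < d ∧ d < δ ∧ d ≤ r₁ :=
    ⟨min δ r₁ / 2, by positivity, by linarith [min_le_left δ r₁, lt_min hδ hr₁],
      by linarith [min_le_right δ r₁, lt_min hδ hr₁]⟩
  set S := Icc d r₁ ∩ f ⁻¹' Iic 0
  have hS : IsClosed S :=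
    (hf.mono fun x hx => hd.trans_le hx.1).preimage_isClosed_of_isClosed isClosed_Icc isClosed_Iic
  have hSbdd : BddBelow S := ⟨d, fun x hx => hx.1.1⟩
  have hr₀S : sInf S ∈ S := hS.csInf_mem ⟨r₁, ⟨hdr₁, le_rfl⟩, hf₁⟩ hSbdd
  have hr₀ : 0 < sInf S := hd.trans_le hr₀S.1.1
  have hpos : ∀ r ∈ Ioo 0 (sInf S), 0 < f r := by
    intro r hr
    by_cases hrδ : r < δ
    · exact hfδ ⟨hr.1, hrδ⟩
    by_contra hfr
    have hrS : r ∈ S := ⟨⟨hdδ.le.trans (not_lt.mp hrδ), hr.2.le.trans hr₀S.1.2⟩, not_lt.mp hfr⟩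
    exact (csInf_le hSbdd hrS).not_gt hr.2
  refine ⟨sInf S, hr₀, le_antisymm hr₀S.2 ?_, hpos⟩
  have hcont : ContinuousWithinAt f (Iio (sInf S)) (sInf S) :=
    (hf.continuousAt (Ioi_mem_nhds hr₀)).continuousWithinAt
  refine ge_of_tendsto hcont ?_
  filter_upwards [Ioo_mem_nhdsLT hr₀] with r hr using (hpos r hr).le

theorem le_of_monotoneOn_of_tendsto {f : ℝ → ℝ} {c : ℝ} (hf : MonotoneOn f (Ioi 0))
    (hc : Tendsto f (𝓝[>] 0) (𝓝 c)) {x : ℝ} (hx : 0 < x) : c ≤ f x :=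
  le_of_tendsto hc (by filter_upwards [Ioo_mem_nhdsGT hx] with a ha using hf ha.1 hx ha.2.le)

theorem eq_of_hasDerivAt_zero_of_tendsto {f : ℝ → ℝ} {c : ℝ} (hf : ∀ x > 0, HasDerivAt f 0 x)
    (hc : Tendsto f (𝓝[>] 0) (𝓝 c)) {x : ℝ} (hx : 0 < x) : f x = c := by
  have hconst : ∀ a > 0, f a = f x := fun a ha =>
    isOpen_Ioi.is_const_of_deriv_eq_zero isPreconnected_Ioi
      (fun y hy => (hf y hy).differentiableAt.differentiableWithinAt)
      (fun y hy => (hf y hy).deriv) ha hx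
  refine tendsto_nhds_unique (tendsto_const_nhds.congr' ?_) hc
  filter_upwards [self_mem_nhdsWithin] with a ha using (hconst a ha).symm

theorem tendsto_rpow_mul_rpow_of_tendsto {g : ℝ → ℝ} {e A s q : ℝ} (hg : ∀ r > 0, 0 < g r)
    (hA : 0 < A) (hglim : Tendsto (fun r => r ^ e * g r) (𝓝[>] 0) (𝓝 A)) (hs : e * q < s) :
    Tendsto (fun r => r ^ s * g r ^ q) (𝓝[>] 0) (𝓝 0) := by
  have h := (tendsto_rpow_nhdsGT_zero (sub_pos.mpr hs)).mul
    (hglim.rpow_const (p := q) (Or.inl hA.ne'))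
  rw [zero_mul] at h
  refine h.congr' ?_
  filter_upwards [self_mem_nhdsWithin] with r (hr : 0 < r)
  rw [Real.mul_rpow (Real.rpow_nonneg hr.le _) (hg r hr).le, ← Real.rpow_mul hr.le, ← mul_assoc,
    ← Real.rpow_add hr]
  ring_nf

def flux (n : ℕ) (m β : ℝ) (u : ℝ → ℝ) (r : ℝ) : ℝ :=
  r ^ (n - 1) * deriv (fun x => u x ^ m) r + β * r ^ n * u r

/-- The radial equation written in divergence form. -/
structure IsFluxSolution (n : ℕ) (m α β : ℝ) (u : ℝ → ℝ) : Prop where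
  pos : ∀ r, 0 < r → 0 < u r
  hasDerivAt : ∀ r, 0 < r → HasDerivAt u (deriv u r) r
  hasDerivAt_flux : ∀ r, 0 < r →
    HasDerivAt (flux n m β u) (((n : ℝ) * β - α) * r ^ (n - 1) * u r) r

namespace IsFluxSolution

variable {n : ℕ} {m α β : ℝ} {u : ℝ → ℝ}

theorem of_ode (hn : 2 ≤ n) (hpos : ∀ r > 0, 0 < u r) (hu : ContDiffOn ℝ 2 u (Ioi 0))
    (hode : ∀ r > 0, deriv (deriv (fun x => u x ^ m)) r
        + (((n : ℝ) - 1) / r) * deriv (fun x => u x ^ m) r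
        + α * u r + β * r * deriv u r = 0) :
    IsFluxSolution n m α β u := by
  have hw : ContDiffOn ℝ 2 (fun x => u x ^ m) (Ioi 0) :=
    hu.rpow_const_of_ne fun x hx => (hpos x hx).ne'
  have hw' : ContDiffOn ℝ 1 (deriv fun x => u x ^ m) (Ioi 0) :=
    hw.deriv_of_isOpen isOpen_Ioi (by norm_num)
  have hu' : ∀ r, 0 < r → HasDerivAt u (deriv u r) r := fun r hr =>
    ((hu.contDiffAt (Ioi_mem_nhds hr)).differentiableAt (by norm_num)).hasDerivAt
  refine ⟨hpos, hu', fun r hr => ?_⟩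
  have hw'' := ((hw'.contDiffAt (Ioi_mem_nhds hr)).differentiableAt one_ne_zero).hasDerivAt
  obtain ⟨k, rfl⟩ : ∃ k, n = k + 2 := ⟨n - 2, by omega⟩
  have hflux : flux (k + 2) m β u
      = fun x => x ^ (k + 1) * deriv (fun x => u x ^ m) x + β * x ^ (k + 2) * u x := by
    ext x; simp [flux]
  have hode := hode r hr
  rw [hflux]
  refine (((hasDerivAt_pow (k + 1) r).mul hw'').add
    (((hasDerivAt_pow (k + 2) r).const_mul β).mul (hu' r hr))).congr_deriv ?_
  field_simp at hode
  push_cast at hode ⊢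
  linear_combination r ^ k * hode

variable (hu : IsFluxSolution n m α β u)
include hu

theorem continuousOn : ContinuousOn u (Ioi 0) :=
  fun r hr => (hu.hasDerivAt r hr).continuousAt.continuousWithinAt

theorem hasDerivAt_rpow (p : ℝ) {r : ℝ} (hr : 0 < r) :
    HasDerivAt (fun x => u x ^ p) (deriv u r * p * u r ^ (p - 1)) r :=
  (hu.hasDerivAt r hr).rpow_const (Or.inl (hu.pos r hr).ne')

theorem continuousOn_flux : ContinuousOn (flux n m β u) (Ioi 0) :=
  fun r hr => (hu.hasDerivAt_flux r hr).continuousAt.continuousWithinAt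

theorem monotoneOn_flux (hκ : 0 ≤ (n : ℝ) * β - α) : MonotoneOn (flux n m β u) (Ioi 0) :=
  monotoneOn_of_hasDerivWithinAt_nonneg (convex_Ioi 0) hu.continuousOn_flux
    (fun r hr => (hu.hasDerivAt_flux r (by simpa using hr)).hasDerivWithinAt)
    (fun r hr => by
      have hr : 0 < r := by simpa using hr
      have := hu.pos r hr
      positivity)

theorem hasDerivAt_sq_sub_rpow_sub_one (hm : m ≠ 0) (hn : 1 ≤ n) {r : ℝ} (hr : 0 < r) :
    HasDerivAt (fun x => (1 - m) * β / (2 * m) * x ^ 2 - u x ^ (m - 1))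
      ((1 - m) / m * (flux n m β u r / (r ^ (n - 1) * u r))) r := by
  refine (((hasDerivAt_pow 2 r).const_mul _).sub (hu.hasDerivAt_rpow (m - 1) hr)).congr_deriv ?_
  have hur := hu.pos r hr
  have hrn : r ^ n = r ^ (n - 1) * r := by rw [← pow_succ, Nat.sub_add_cancel hn]
  rw [flux, (hu.hasDerivAt_rpow m hr).deriv, hrn,
    Real.rpow_sub_one hur.ne' (m - 1), Real.rpow_sub_one hur.ne' m]
  field_simp
  ring

theorem monotoneOn_sq_sub_rpow_sub_one (hn : 1 ≤ n) (hm : 0 < m) (hm1 : m < 1)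
    (hflux : ∀ r > 0, 0 ≤ flux n m β u r) :
    MonotoneOn (fun x => (1 - m) * β / (2 * m) * x ^ 2 - u x ^ (m - 1)) (Ioi 0) :=
  monotoneOn_of_hasDerivWithinAt_nonneg (convex_Ioi 0)
    (fun x hx => (hu.hasDerivAt_sq_sub_rpow_sub_one hm.ne' hn hx).continuousAt.continuousWithinAt)
    (fun x hx => (hu.hasDerivAt_sq_sub_rpow_sub_one hm.ne' hn
      (by simpa using hx)).hasDerivWithinAt)
    (fun x hx => by
      rw [interior_Ioi, mem_Ioi] at hx
      have := hflux x hx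
      have := hu.pos x hx
      have := sub_pos.mpr hm1
      positivity)

theorem antitoneOn_rpow_sub_rpow (hn : 3 ≤ n) (hβ : 0 ≤ β) (hκ : 0 ≤ (n : ℝ) * β - α) {r : ℝ}
    (hr : 0 < r) :
    AntitoneOn (fun a => u a ^ m - flux n m β u r / (2 - n) * a ^ ((2 : ℝ) - n)) (Ioc 0 r) := by
  set c := flux n m β u r
  have hn2 : (2 : ℝ) - n ≠ 0 := by
    have : (3 : ℝ) ≤ n := by exact_mod_cast hn
    linarith
  have hderiv : ∀ a, 0 < a → HasDerivAt (fun a => u a ^ m - c / (2 - n) * a ^ ((2 : ℝ) - n))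
      (deriv u a * m * u a ^ (m - 1) - c * a ^ ((1 : ℝ) - n)) a := by
    intro a ha
    refine (hu.hasDerivAt_rpow m ha).sub
      (((Real.hasDerivAt_rpow_const (Or.inl ha.ne')).const_mul _).congr_deriv ?_)
    rw [show (2 : ℝ) - n - 1 = 1 - n by ring]
    field_simp
  refine antitoneOn_of_hasDerivWithinAt_nonpos (convex_Ioc 0 r)
    (fun a ha => (hderiv a ha.1).continuousAt.continuousWithinAt)
    (fun a ha => (hderiv a (by rw [interior_Ioc] at ha; exact ha.1)).hasDerivWithinAt) ?_
  intro a ha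
  rw [interior_Ioc] at ha
  have hfa : flux n m β u a ≤ c := hu.monotoneOn_flux hκ ha.1 hr ha.2.le
  have hpow : a ^ ((1 : ℝ) - n) = (a ^ (n - 1))⁻¹ := by
    rw [← Real.rpow_natCast, ← Real.rpow_neg ha.1.le, Nat.cast_sub (by omega)]
    ring_nf
  rw [flux, (hu.hasDerivAt_rpow m ha.1).deriv] at hfa
  rw [hpow, sub_nonpos, ← div_eq_mul_inv, le_div_iff₀ (pow_pos ha.1 _)]
  nlinarith [mul_nonneg (mul_nonneg hβ (pow_pos ha.1 n).le) (hu.pos a ha.1).le]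

/-- A negative flux would force `u^m ≳ r^(2-n)` at the origin. -/
theorem flux_nonneg (hn : 3 ≤ n) (hβ : 0 ≤ β) (hκ : 0 ≤ (n : ℝ) * β - α)
    (hlim : Tendsto (fun r => r ^ ((n : ℝ) - 2) * u r ^ m) (𝓝[>] 0) (𝓝 0)) {r : ℝ}
    (hr : 0 < r) : 0 ≤ flux n m β u r := by
  by_contra! hneg
  set c := flux n m β u r
  set ψ := fun a => u a ^ m - c / (2 - n) * a ^ ((2 : ℝ) - n)
  have hn3 : (3 : ℝ) ≤ n := by exact_mod_cast hn
  have hc : 0 < c / (2 - n) := div_pos_of_neg_of_neg hneg (by linarith)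
  have hbound : ∀ᶠ a in 𝓝[>] 0,
      a ^ ((n : ℝ) - 2) * ψ r + c / (2 - n) ≤ a ^ ((n : ℝ) - 2) * u a ^ m := by
    filter_upwards [Ioo_mem_nhdsGT hr] with a ha
    have hψ := hu.antitoneOn_rpow_sub_rpow hn hβ hκ hr ⟨ha.1, ha.2.le⟩ ⟨hr, le_rfl⟩ ha.2.le
    have hcancel : a ^ ((n : ℝ) - 2) * a ^ ((2 : ℝ) - n) = 1 := by
      rw [← Real.rpow_add ha.1]; norm_num
    have : a ^ ((n : ℝ) - 2) * u a ^ m = a ^ ((n : ℝ) - 2) * ψ a + c / (2 - n) := by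
      simp only [ψ]; linear_combination (c / (2 - n)) * hcancel
    rw [this]
    have := ha.1
    gcongr
  have hlim' : Tendsto (fun a => a ^ ((n : ℝ) - 2) * ψ r + c / (2 - n)) (𝓝[>] 0)
      (𝓝 (c / (2 - n))) := by
    simpa using ((tendsto_rpow_nhdsGT_zero (by linarith)).mul_const (ψ r)).add_const (c / (2 - n))
  linarith [le_of_tendsto_of_tendsto hlim' hlim hbound]

end IsFluxSolution

theorem IsFluxSolution.flux_lt_flux {n : ℕ} {m α β : ℝ} {u₁ u₂ : ℝ → ℝ}
    (hκ : 0 < (n : ℝ) * β - α) (hu₁ : IsFluxSolution n m α β u₁)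
    (hu₂ : IsFluxSolution n m α β u₂) (hflux₁ : Tendsto (flux n m β u₁) (𝓝[>] 0) (𝓝 0))
    (hflux₂ : ∀ r > 0, 0 ≤ flux n m β u₂ r) {r₀ : ℝ} (hr₀ : 0 < r₀)
    (hlt : ∀ r ∈ Ioo 0 r₀, u₁ r < u₂ r) : flux n m β u₁ r₀ < flux n m β u₂ r₀ := by
  set F := fun r => flux n m β u₂ r - flux n m β u₁ r
  have hF : StrictMonoOn F (Ioc 0 r₀) := by
    refine strictMonoOn_of_hasDerivWithinAt_pos (convex_Ioc 0 r₀)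
      (f' := fun r => ((n : ℝ) * β - α) * r ^ (n - 1) * u₂ r
        - ((n : ℝ) * β - α) * r ^ (n - 1) * u₁ r)
      ((hu₂.continuousOn_flux.sub hu₁.continuousOn_flux).mono Ioc_subset_Ioi_self)
      (fun r hr => ?_) (fun r hr => ?_)
    all_goals rw [interior_Ioc] at hr
    · exact ((hu₂.hasDerivAt_flux r hr.1).sub (hu₁.hasDerivAt_flux r hr.1)).hasDerivWithinAt
    · have := pow_pos hr.1 (n - 1)
      have := sub_pos.mpr (hlt r hr)
      rw [← mul_sub]
      positivity
  have hhalf : r₀ / 2 ∈ Ioc 0 r₀ := ⟨half_pos hr₀, half_le_self hr₀.le⟩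
  have hgap : F (r₀ / 2) < F r₀ := hF hhalf (right_mem_Ioc.mpr hr₀) (half_lt_self hr₀)
  obtain ⟨a, haF, ha⟩ := ((hflux₁.eventually (eventually_lt_nhds (sub_pos.mpr hgap))).and
    (Ioo_mem_nhdsGT (half_pos hr₀))).exists
  have : F a < F (r₀ / 2) := hF ⟨ha.1, ha.2.le.trans hhalf.2⟩ hhalf ha.2
  linarith [hflux₂ a ha.1]

theorem IsFluxSolution.lt_of_eventually_lt {n : ℕ} {m α β : ℝ} {u₁ u₂ : ℝ → ℝ} (hm : 0 < m)
    (hκ : 0 < (n : ℝ) * β - α) (hu₁ : IsFluxSolution n m α β u₁)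
    (hu₂ : IsFluxSolution n m α β u₂) (h0 : ∀ᶠ r in 𝓝[>] 0, u₁ r < u₂ r)
    (hflux₁ : Tendsto (flux n m β u₁) (𝓝[>] 0) (𝓝 0)) (hflux₂ : ∀ r > 0, 0 ≤ flux n m β u₂ r) :
    ∀ r > 0, u₁ r < u₂ r := by
  by_contra! ⟨r₁, hr₁, h₁⟩
  obtain ⟨r₀, hr₀, hzero, hpos⟩ := exists_first_zero (f := fun r => u₂ r - u₁ r)
    (hu₂.continuousOn.sub hu₁.continuousOn) (h0.mono fun r hr => sub_pos.mpr hr) hr₁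
    (sub_nonpos.mpr h₁)
  have hflux := hu₁.flux_lt_flux hκ hu₂ hflux₁ hflux₂ hr₀ fun r hr => sub_pos.mp (hpos r hr)
  have hderiv : deriv u₁ r₀ < deriv u₂ r₀ := by
    have hu : u₁ r₀ = u₂ r₀ := by linarith [show u₂ r₀ - u₁ r₀ = 0 from hzero]
    have hw : 0 < r₀ ^ (n - 1) * m * u₁ r₀ ^ (m - 1) := by
      have := hu₁.pos r₀ hr₀
      positivity
    rw [← sub_pos] at hflux
    have : flux n m β u₂ r₀ - flux n m β u₁ r₀
        = r₀ ^ (n - 1) * m * u₁ r₀ ^ (m - 1) * (deriv u₂ r₀ - deriv u₁ r₀) := by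
      simp only [flux, (hu₁.hasDerivAt_rpow m hr₀).deriv, (hu₂.hasDerivAt_rpow m hr₀).deriv, hu]
      ring
    rw [this] at hflux
    linarith [pos_of_mul_pos_right hflux hw.le]
  have := HasDerivAt.nonpos_of_eventually_lt_left
    ((hu₂.hasDerivAt r₀ hr₀).sub (hu₁.hasDerivAt r₀ hr₀)) (by
      filter_upwards [Ioo_mem_nhdsLT hr₀] with r hr
      simpa [hzero] using hpos r hr)
  linarith

namespace IsRegularSolution

variable {n : ℕ} {m α β lam : ℝ} {v : ℝ → ℝ} (hv : IsRegularSolution n m α β lam v)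
include hv

theorem isFluxSolution (hn : 2 ≤ n) : IsFluxSolution n m α β v :=
  .of_ode hn (fun r hr => hv.2.1 r hr.le) (hv.2.2.1.of_le (WithTop.coe_le_coe.mpr le_top))
    hv.2.2.2.2.2

theorem tendsto_nhdsGT : Tendsto v (𝓝[>] 0) (𝓝 lam) := by
  have h := hv.1 0 self_mem_Ici
  rw [ContinuousWithinAt, hv.2.2.2.1] at h
  exact h.mono_left (nhdsWithin_mono 0 Ioi_subset_Ici_self)

theorem tendsto_flux (hn : 1 ≤ n) : Tendsto (flux n m β v) (𝓝[>] 0) (𝓝 0) := by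
  have hcast : ((n - 1 : ℕ) : ℝ) = (n : ℝ) - 1 := by push_cast [hn]; ring
  have h1 : Tendsto (fun r : ℝ => r ^ (n - 1) * deriv (fun x => v x ^ m) r) (𝓝[>] 0) (𝓝 0) := by
    refine hv.2.2.2.2.1.congr' ?_
    filter_upwards [self_mem_nhdsWithin] with r (hr : 0 < r)
    rw [← Real.rpow_natCast r (n - 1), hcast]
  have h2 : Tendsto (fun r : ℝ => β * r ^ n) (𝓝[>] 0) (𝓝 0) := by
    have : Tendsto (fun r : ℝ => β * r ^ n) (𝓝 0) (𝓝 (β * 0 ^ n)) :=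
      (continuous_const.mul (continuous_pow n)).tendsto 0
    simpa [zero_pow (by omega : n ≠ 0)] using this.mono_left nhdsWithin_le_nhds
  have h := h1.add (h2.mul hv.tendsto_nhdsGT)
  rwa [zero_mul, add_zero] at h

theorem flux_nonneg (hn : 2 ≤ n) (hκ : 0 ≤ (n : ℝ) * β - α) {r : ℝ} (hr : 0 < r) :
    0 ≤ flux n m β v r :=
  le_of_monotoneOn_of_tendsto ((hv.isFluxSolution hn).monotoneOn_flux hκ)
    (hv.tendsto_flux (by omega)) hr

theorem rpow_sub_one_eq (hn : 2 ≤ n) (hm : m ≠ 0) (hlam : 0 < lam)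
    (hκ : (n : ℝ) * β - α = 0) {r : ℝ} (hr : 0 < r) :
    v r ^ (m - 1) = lam ^ (m - 1) + (1 - m) * β / (2 * m) * r ^ 2 := by
  have hu := hv.isFluxSolution hn
  have hflux : ∀ x > 0, flux n m β v x = 0 :=
    fun x hx => eq_of_hasDerivAt_zero_of_tendsto
      (fun y hy => by simpa [hκ] using hu.hasDerivAt_flux y hy) (hv.tendsto_flux (by omega)) hx
  have hlim : Tendsto (fun x => (1 - m) * β / (2 * m) * x ^ 2 - v x ^ (m - 1)) (𝓝[>] 0)
      (𝓝 ((1 - m) * β / (2 * m) * 0 ^ 2 - lam ^ (m - 1))) :=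
    ((((continuous_pow 2).tendsto 0).const_mul _).mono_left nhdsWithin_le_nhds).sub
      (hv.tendsto_nhdsGT.rpow_const (Or.inl hlam.ne'))
  have := eq_of_hasDerivAt_zero_of_tendsto (fun x hx => by
    simpa [hflux x hx] using hu.hasDerivAt_sq_sub_rpow_sub_one hm (by omega) hx) hlim hr
  linarith

end IsRegularSolution

theorem IsSingularSolution.isFluxSolution {n : ℕ} {m α β : ℝ} {g : ℝ → ℝ}
    (hg : IsSingularSolution n m α β g) (hn : 2 ≤ n) : IsFluxSolution n m α β g :=
  .of_ode hn hg.1 (hg.2.1.of_le (WithTop.coe_le_coe.mpr le_top)) hg.2.2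

def singularProfile (m C r : ℝ) : ℝ := (C / r ^ 2) ^ (1 / (1 - m))

section singularProfile

variable {m C : ℝ}

theorem singularProfile_pos (hC : 0 < C) {r : ℝ} (hr : 0 < r) : 0 < singularProfile m C r := by
  unfold singularProfile; positivity

theorem singularProfile_rpow (hC : 0 < C) (p : ℝ) {r : ℝ} (hr : 0 < r) :
    singularProfile m C r ^ p = C ^ (p / (1 - m)) * r ^ (-(2 * p / (1 - m))) := by
  rw [singularProfile, ← Real.rpow_mul (by positivity), Real.div_rpow hC.le (by positivity),
    ← Real.rpow_natCast, ← Real.rpow_mul hr.le, div_eq_mul_inv _ (r ^ _), ← Real.rpow_neg hr.le]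
  ring_nf

theorem singularProfile_rpow_sub_one (hC : 0 < C) (hm : m < 1) {r : ℝ} (hr : 0 < r) :
    singularProfile m C r ^ (m - 1) = r ^ 2 / C := by
  have h1m : 1 - m ≠ 0 := (sub_pos.mpr hm).ne'
  rw [singularProfile_rpow hC _ hr, show (m - 1) / (1 - m) = -1 by field_simp; ring,
    show -(2 * (m - 1) / (1 - m)) = 2 by field_simp; ring, Real.rpow_neg_one, Real.rpow_two]
  ring

theorem hasDerivAt_singularProfile_rpow (hC : 0 < C) (p : ℝ) {r : ℝ} (hr : 0 < r) :
    HasDerivAt (fun x => singularProfile m C x ^ p)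
      (-(2 * p / (1 - m)) * singularProfile m C r ^ p / r) r := by
  have hloc : (fun x => C ^ (p / (1 - m)) * x ^ (-(2 * p / (1 - m))))
      =ᶠ[𝓝 r] fun x => singularProfile m C x ^ p :=
    eventually_of_mem (Ioi_mem_nhds hr) fun x hx => (singularProfile_rpow hC p hx).symm
  refine (((Real.hasDerivAt_rpow_const (Or.inl hr.ne')).const_mul _).congr_of_eventuallyEq
    hloc.symm).congr_deriv ?_
  rw [singularProfile_rpow hC p hr, Real.rpow_sub_one hr.ne']
  ring

theorem rpow_mul_singularProfile (hC : 0 < C) (e : ℝ) {r : ℝ} (hr : 0 < r) :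
    r ^ e * singularProfile m C r = C ^ (1 / (1 - m)) * r ^ (e - 2 / (1 - m)) := by
  rw [← Real.rpow_one (singularProfile m C r), singularProfile_rpow hC 1 hr, Real.rpow_sub hr,
    Real.rpow_neg hr.le, mul_one]
  ring

theorem tendsto_rpow_mul_singularProfile (hC : 0 < C) {e : ℝ} (he : 2 / (1 - m) < e) :
    Tendsto (fun r => r ^ e * singularProfile m C r) (𝓝[>] 0) (𝓝 0) := by
  have h := (tendsto_rpow_nhdsGT_zero (sub_pos.mpr he)).const_mul (C ^ (1 / (1 - m)))
  rw [mul_zero] at h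
  refine h.congr' ?_
  filter_upwards [self_mem_nhdsWithin] with r (hr : 0 < r)
  rw [rpow_mul_singularProfile hC e hr]

theorem tendsto_singularProfile_atTop (hC : 0 < C) (hm : m < 1) :
    Tendsto (singularProfile m C) (𝓝[>] 0) atTop := by
  have h := (tendsto_rpow_neg_nhdsGT_zero (y := -(2 / (1 - m))) (by
    have := sub_pos.mpr hm; rw [neg_lt_zero]; positivity)).const_mul_atTop
    (Real.rpow_pos_of_pos hC (1 / (1 - m)))
  refine h.congr' ?_
  filter_upwards [self_mem_nhdsWithin] with r (hr : 0 < r)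
  rw [← Real.rpow_one (singularProfile m C r), singularProfile_rpow hC 1 hr]
  ring_nf

theorem hasDerivAt_singularProfile (hC : 0 < C) {r : ℝ} (hr : 0 < r) :
    HasDerivAt (singularProfile m C) (-(2 / (1 - m)) * singularProfile m C r / r) r := by
  simpa using hasDerivAt_singularProfile_rpow (m := m) hC 1 hr

variable {β₁ : ℝ} (hβ₁ : (1 - m) * β₁ * C = 2 * m) (hm : m < 1) (hC : 0 < C)
include hβ₁ hm hC

theorem flux_singularProfile {n : ℕ} (hn : 1 ≤ n) (β : ℝ) {r : ℝ} (hr : 0 < r) :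
    flux n m β (singularProfile m C) r = (β - β₁) * (r ^ n * singularProfile m C r) := by
  have h1m : 1 - m ≠ 0 := (sub_pos.mpr hm).ne'
  have hU := singularProfile_pos (m := m) hC hr
  have hUm : singularProfile m C r ^ m = singularProfile m C r * (r ^ 2 / C) := by
    rw [← singularProfile_rpow_sub_one hC hm hr, Real.rpow_sub_one hU.ne']
    field_simp
  have hrn : r ^ n = r ^ (n - 1) * r := by rw [← pow_succ, Nat.sub_add_cancel hn]
  rw [flux, (hasDerivAt_singularProfile_rpow hC m hr).deriv, hUm, hrn]
  field_simp
  linear_combination hβ₁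

theorem isFluxSolution_singularProfile {n : ℕ} (hn : 1 ≤ n) {α β : ℝ}
    (hκ : (n : ℝ) * β - α = ((n : ℝ) - 2 / (1 - m)) * (β - β₁)) :
    IsFluxSolution n m α β (singularProfile m C) := by
  refine ⟨fun r hr => singularProfile_pos hC hr,
    fun r hr => (hasDerivAt_singularProfile hC hr).differentiableAt.hasDerivAt, fun r hr => ?_⟩
  have hloc : flux n m β (singularProfile m C)
      =ᶠ[𝓝 r] fun x => (β - β₁) * (x ^ n * singularProfile m C x) :=
    eventually_of_mem (Ioi_mem_nhds hr) fun x hx => flux_singularProfile hβ₁ hm hC hn β hx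
  refine ((((hasDerivAt_pow n r).mul (hasDerivAt_singularProfile hC hr)).const_mul
    _).congr_of_eventuallyEq hloc).congr_deriv ?_
  have hrn : r ^ n = r ^ (n - 1) * r := by rw [← pow_succ, Nat.sub_add_cancel hn]
  rw [hκ, hrn]
  field_simp
  ring

theorem tendsto_flux_singularProfile {n : ℕ} (hn : 1 ≤ n) (hnm : 2 / (1 - m) < n) (β : ℝ) :
    Tendsto (flux n m β (singularProfile m C)) (𝓝[>] 0) (𝓝 0) := by
  have h := (tendsto_rpow_mul_singularProfile hC hnm).const_mul (β - β₁)
  rw [mul_zero] at h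
  refine h.congr' ?_
  filter_upwards [self_mem_nhdsWithin] with r (hr : 0 < r)
  rw [flux_singularProfile hβ₁ hm hC hn β hr, Real.rpow_natCast]

end singularProfile

theorem IsFluxSolution.singularProfile_lt_of_critical {n : ℕ} {m α β C e A : ℝ} {g : ℝ → ℝ}
    (hg : IsFluxSolution n m α β g) (hn : 1 ≤ n) (hm : 0 < m) (hm1 : m < 1) (hC : 0 < C)
    (hβC : (1 - m) * β * C = 2 * m) (hflux : ∀ r > 0, 0 ≤ flux n m β g r)
    (he : 2 / (1 - m) < e) (hA : 0 < A) (hglim : Tendsto (fun r => r ^ e * g r) (𝓝[>] 0) (𝓝 A))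
    {r : ℝ} (hr : 0 < r) : singularProfile m C r < g r := by
  set W := fun x => (1 - m) * β / (2 * m) * x ^ 2 - g x ^ (m - 1)
  have hW : ∀ x > 0, W x = singularProfile m C x ^ (m - 1) - g x ^ (m - 1) := by
    intro x hx
    simp only [W, singularProfile_rpow_sub_one hC hm1 hx]
    field_simp
    linear_combination x ^ 2 * hβC
  have hmono : MonotoneOn W (Ioi 0) := hg.monotoneOn_sq_sub_rpow_sub_one hn hm hm1 hflux
  have hWlim : Tendsto W (𝓝[>] 0) (𝓝 0) := by
    have hsq : Tendsto (fun x : ℝ => (1 - m) * β / (2 * m) * x ^ 2) (𝓝 0) (𝓝 0) := by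
      simpa using ((continuous_pow 2).tendsto (0 : ℝ)).const_mul ((1 - m) * β / (2 * m))
    have hgm := tendsto_rpow_mul_rpow_of_tendsto (s := 0) (q := m - 1) hg.pos hA hglim
      (mul_neg_of_pos_of_neg ((div_pos two_pos (sub_pos.mpr hm1)).trans he) (by linarith))
    simpa using (hsq.mono_left nhdsWithin_le_nhds).sub hgm
  by_contra! hle
  have hgU : ∀ x ∈ Ioc 0 r, g x = singularProfile m C x := by
    intro x hx
    have hWr : W r ≤ 0 := by
      rw [hW r hr, sub_nonpos]
      exact (Real.rpow_le_rpow_iff_of_neg (singularProfile_pos hC hr) (hg.pos r hr)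
        (by linarith)).mpr hle
    have hWx : W x = 0 :=
      le_antisymm ((hmono hx.1 hr hx.2).trans hWr) (le_of_monotoneOn_of_tendsto hmono hWlim hx.1)
    rw [hW x hx.1, sub_eq_zero] at hWx
    exact ((Real.rpow_left_inj (singularProfile_pos hC hx.1).le (hg.pos x hx.1).le
      (by linarith)).mp hWx).symm
  have hlim0 : Tendsto (fun x => x ^ e * g x) (𝓝[>] 0) (𝓝 0) := by
    refine (tendsto_rpow_mul_singularProfile hC he).congr' ?_
    filter_upwards [Ioo_mem_nhdsGT hr] with x hx
    rw [hgU x ⟨hx.1, hx.2.le⟩]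
  exact hA.ne' (tendsto_nhds_unique hglim hlim0)

theorem IsRegularSolution.lt_of_initial_lt {n : ℕ} {m α β lam₁ lam₂ : ℝ} {v₁ v₂ : ℝ → ℝ}
    (hv₁ : IsRegularSolution n m α β lam₁ v₁) (hv₂ : IsRegularSolution n m α β lam₂ v₂)
    (hn : 2 ≤ n) (hm : 0 < m) (hm1 : m < 1) (hκ : 0 ≤ (n : ℝ) * β - α) (hlam₁ : 0 < lam₁)
    (hlam : lam₁ < lam₂) {r : ℝ} (hr : 0 ≤ r) : v₁ r < v₂ r := by
  rcases hr.eq_or_lt with rfl | hr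
  · rwa [hv₁.2.2.2.1, hv₂.2.2.2.1]
  rcases hκ.eq_or_lt with hκ | hκ
  · have hm1' : m - 1 < 0 := by linarith
    rw [← Real.rpow_lt_rpow_iff_of_neg (hv₂.2.1 r hr.le) (hv₁.2.1 r hr.le) hm1',
      hv₁.rpow_sub_one_eq hn hm.ne' hlam₁ hκ.symm hr,
      hv₂.rpow_sub_one_eq hn hm.ne' (hlam₁.trans hlam) hκ.symm hr]
    linarith [Real.rpow_lt_rpow_of_neg hlam₁ hlam hm1']
  · exact (hv₁.isFluxSolution hn).lt_of_eventually_lt hm hκ (hv₂.isFluxSolution hn)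
      (hv₁.tendsto_nhdsGT.eventually_lt hv₂.tendsto_nhdsGT hlam) (hv₁.tendsto_flux (by omega))
      (fun r hr => hv₂.flux_nonneg hn hκ.le hr) r hr

section

variable {n : ℕ} {m α β β₁ C : ℝ} (hm : 0 < m) (hm1 : m < 1) (hC : 0 < C)
  (hβ₁ : (1 - m) * β₁ * C = 2 * m) (hnm : 2 / (1 - m) < n) (hβ : β₁ ≤ β)
  (hκ : (n : ℝ) * β - α = ((n : ℝ) - 2 / (1 - m)) * (β - β₁))
include hm hm1 hC hβ₁ hnm hβ hκ

theorem IsRegularSolution.lt_singularProfile {lam : ℝ} {v : ℝ → ℝ}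
    (hv : IsRegularSolution n m α β lam v) (hn : 2 ≤ n) (hlam : 0 < lam) {r : ℝ} (hr : 0 < r) :
    v r < singularProfile m C r := by
  rcases hβ.eq_or_lt with rfl | hβ
  · rw [← Real.rpow_lt_rpow_iff_of_neg (singularProfile_pos hC hr) (hv.2.1 r hr.le)
      (by linarith : m - 1 < 0), hv.rpow_sub_one_eq hn hm.ne' hlam (by simp [hκ]) hr,
      singularProfile_rpow_sub_one hC hm1 hr]
    have : r ^ 2 / C = (1 - m) * β₁ / (2 * m) * r ^ 2 := by
      field_simp
      linear_combination -hβ₁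
    rw [this, lt_add_iff_pos_left]
    positivity
  · have hκ' : 0 < (n : ℝ) * β - α := by
      rw [hκ]; exact mul_pos (sub_pos.mpr hnm) (sub_pos.mpr hβ)
    refine (hv.isFluxSolution hn).lt_of_eventually_lt hm hκ'
      (isFluxSolution_singularProfile hβ₁ hm1 hC (by omega) hκ) ?_ (hv.tendsto_flux (by omega))
      (fun r hr => ?_) r hr
    · filter_upwards [hv.tendsto_nhdsGT.eventually_lt_const (lt_add_one lam),
        (tendsto_singularProfile_atTop hC hm1).eventually_gt_atTop (lam + 1)] with x h₁ h₂
      linarith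
    · rw [flux_singularProfile hβ₁ hm1 hC (by omega) β hr]
      have := singularProfile_pos (m := m) hC hr
      have := sub_pos.mpr hβ
      positivity

theorem IsFluxSolution.singularProfile_lt {A : ℝ} {g : ℝ → ℝ} (hg : IsFluxSolution n m α β g)
    (hn : 3 ≤ n) (hA : 0 < A) (hglim : Tendsto (fun r => r ^ (α / β) * g r) (𝓝[>] 0) (𝓝 A))
    {r : ℝ} (hr : 0 < r) : singularProfile m C r < g r := by
  have h1m : 0 < 1 - m := sub_pos.mpr hm1
  have hβ₁pos : 0 < β₁ := by
    have : 0 < (1 - m) * C * β₁ := by linarith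
    exact pos_of_mul_pos_right this (mul_pos h1m hC).le
  have hβ0 : 0 < β := hβ₁pos.trans_le hβ
  have hκ0 : 0 ≤ (n : ℝ) * β - α := by
    rw [hκ]; exact mul_nonneg (sub_pos.mpr hnm).le (sub_nonneg.mpr hβ)
  have he : 2 / (1 - m) < α / β := by
    have hκ' : (1 - m) * ((n : ℝ) * β - α) = ((1 - m) * n - 2) * (β - β₁) := by
      rw [hκ]; field_simp
    have : α / β = 2 / (1 - m) + ((n : ℝ) - 2 / (1 - m)) * β₁ / β := by
      field_simp
      linear_combination -hκ'
    rw [this, lt_add_iff_pos_right]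
    have := sub_pos.mpr hnm
    positivity
  have hem : α / β * m < n - 2 := by
    have h₁ : α / β ≤ n := by rw [div_le_iff₀ hβ0]; linarith
    have h₂ : 2 < (n : ℝ) * (1 - m) := (div_lt_iff₀ h1m).mp hnm
    nlinarith
  have hflux : ∀ r > 0, 0 ≤ flux n m β g r := fun r hr =>
    hg.flux_nonneg hn hβ0.le hκ0 (tendsto_rpow_mul_rpow_of_tendsto hg.pos hA hglim hem) hr
  rcases hβ.eq_or_lt with rfl | hβ
  · exact hg.singularProfile_lt_of_critical (by omega) hm hm1 hC hβ₁ hflux he hA hglim hr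
  have hκ' : 0 < (n : ℝ) * β - α := by
    rw [hκ]; exact mul_pos (sub_pos.mpr hnm) (sub_pos.mpr hβ)
  refine (isFluxSolution_singularProfile hβ₁ hm1 hC (by omega) hκ).lt_of_eventually_lt hm hκ' hg
    ?_ (tendsto_flux_singularProfile hβ₁ hm1 hC (by omega) hnm β) hflux r hr
  filter_upwards [(tendsto_rpow_mul_singularProfile hC he).eventually_lt hglim hA,
    self_mem_nhdsWithin] with x hx (hx0 : 0 < x)
  exact lt_of_mul_lt_mul_left hx (Real.rpow_nonneg hx0.le _)

end

/-- (i) comparison of regular solutions: `λ₁ < λ₂` implies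
`v_{λ₁} < v_{λ₂}` on `[0,∞)`; (ii) `v_λ(r) < (C_*/r²)^{1/(1-m)} < g_λ(r)` for `r > 0`. -/
theorem stmt12 (n : ℕ) (m ρ₁ lam₁ lam₂ lam β α : ℝ)
    (hn : 3 ≤ n) (hm : 0 < m) (hm2 : m < ((n : ℝ) - 2) / n)
    (hρ : 0 < ρ₁) (hlam₁ : 0 < lam₁) (hlam₂ : lam₁ < lam₂) (hlam : 0 < lam)
    (hβ : β ≥ ρ₁ / ((n : ℝ) - 2 - n * m))
    (hα : α = (2 * β + ρ₁) / (1 - m))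
    (v₁ v₂ v g : ℝ → ℝ)
    (hv₁ : IsRegularSolution n m α β lam₁ v₁)
    (hv₂ : IsRegularSolution n m α β lam₂ v₂)
    (hv : IsRegularSolution n m α β lam v)
    (hg : IsSingularSolution n m α β g)
    (hglim : Tendsto (fun r => r ^ (α / β) * g r) (nhdsWithin 0 (Ioi 0))
      (nhds (lam ^ (-(ρ₁ / ((1 - m) * β)))))) :
    (∀ r, 0 ≤ r → v₁ r < v₂ r) ∧
    (∀ r > 0,
      v r < ((2 * m * ((n : ℝ) - 2 - n * m) / ((1 - m) * ρ₁)) / r ^ 2) ^ (1 / (1 - m)) ∧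
      ((2 * m * ((n : ℝ) - 2 - n * m) / ((1 - m) * ρ₁)) / r ^ 2) ^ (1 / (1 - m)) < g r) := by
  have hn3 : (3 : ℝ) ≤ n := by exact_mod_cast hn
  have hD : 0 < (n : ℝ) - 2 - n * m := by
    rw [lt_div_iff₀ (by linarith)] at hm2; linarith
  have hm1 : m < 1 := by nlinarith
  have h1m : 0 < 1 - m := sub_pos.mpr hm1
  have hC : 0 < 2 * m * ((n : ℝ) - 2 - n * m) / ((1 - m) * ρ₁) := by positivity
  have hβ₁ : (1 - m) * (ρ₁ / ((n : ℝ) - 2 - n * m))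
      * (2 * m * ((n : ℝ) - 2 - n * m) / ((1 - m) * ρ₁)) = 2 * m := by
    field_simp
    exact div_self (by rw [mul_comm]; exact hD.ne')
  have hnm : 2 / (1 - m) < n := by rw [div_lt_iff₀ h1m]; linarith
  have hκ : (n : ℝ) * β - α = ((n : ℝ) - 2 / (1 - m)) * (β - ρ₁ / ((n : ℝ) - 2 - n * m)) := by
    rw [hα]; field_simp; ring
  have hκ0 : 0 ≤ (n : ℝ) * β - α := by
    rw [hκ]; exact mul_nonneg (sub_pos.mpr hnm).le (sub_nonneg.mpr hβ)
  exact ⟨fun r hr => hv₁.lt_of_initial_lt hv₂ (by omega) hm hm1 hκ0 hlam₁ hlam₂ hr, fun r hr =>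
    ⟨hv.lt_singularProfile hm hm1 hC hβ₁ hnm hβ hκ (by omega) hlam hr,
      (hg.isFluxSolution (by omega)).singularProfile_lt hm hm1 hC hβ₁ hnm hβ hκ hn
        (Real.rpow_pos_of_pos hlam _) hglim hr⟩⟩
end
end

section
/- Let n ≥ 3 be an integer, 0 < m < (n-2)/n, ρ₁ > 0, λ₁ > 0, λ₂ > 0, β > β₁ = ρ₁/(n-2-nm) and α = (2β+ρ₁)/(1-m), and suppose A(β)² ≥ 8(n-2-nm)(1-m) where A(β) = n-2-(n+2)m + 2β(n-2-nm)/ρ₁; set γ₁ = (A(β) − √(A(β)² − 8(n-2-nm)(1-m)))/(2(1-m)). For i = 1,2 let v_{λ_i} be a radially symmetric solution of Δv^m + αv + βx·∇v = 0, v > 0, in ℝ^n with v_{λ_i}(0) = λ_i satisfying lim_{r→∞} r^{γ₁}((r²/C_*)^{1/(1-m)} v_{λ_i}(r) − 1) = −B_{λ_i} for constants B_{λ₁}, B_{λ₂}, and assume radially symmetric solutions with prescribed value at 0 are unique. Then B_{λ₂} = (λ₁/λ₂)^{(1-m)γ₁/2} B_{λ₁}. -/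
/-! The equation is invariant under `v ↦ k^{2/(1-m)} v(k ·)` for every `k > 0`: this rescaling
multiplies the value at `0` by `k^{2/(1-m)}`, and since `((kr)²/C)^{1/(1-m)} = k^{2/(1-m)} (r²/C)^{1/(1-m)}`
it turns the constant `B` of the expansion at infinity into `k^{-γ₁} B`.
With `k = (λ₂/λ₁)^{(1-m)/2}`, uniqueness identifies `v_{λ₂}` with the rescaled `v_{λ₁}`. -/
open Real Filter Set

noncomputable section

/-- `A(β) = n-2-(n+2)m + 2β(n-2-nm)/ρ₁`. -/
def Abeta (n : ℕ) (m ρ₁ β : ℝ) : ℝ :=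
  (n : ℝ) - 2 - ((n : ℝ) + 2) * m + 2 * β * ((n : ℝ) - 2 - n * m) / ρ₁

/-- The smaller root `γ₁` of the characteristic equation. -/
def gamma1 (n : ℕ) (m ρ₁ β : ℝ) : ℝ :=
  (Abeta n m ρ₁ β -
      Real.sqrt (Abeta n m ρ₁ β ^ 2 - 8 * ((n : ℝ) - 2 - n * m) * (1 - m))) /
    (2 * (1 - m))

/-- The constant `C_* = 2m(n-2-nm)/((1-m)ρ₁)`. -/
def Cstar (n : ℕ) (m ρ₁ : ℝ) : ℝ :=
  2 * m * ((n : ℝ) - 2 - n * m) / ((1 - m) * ρ₁)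

open Topology

theorem Real.mul_rpow_of_pos_left {x : ℝ} (hx : 0 < x) (y z : ℝ) :
    (x * y) ^ z = x ^ z * y ^ z := by
  rcases le_or_gt 0 y with hy | hy
  · exact mul_rpow hx.le hy
  · rw [rpow_def_of_neg (mul_neg_of_pos_of_neg hx hy), rpow_def_of_neg hy, rpow_def_of_pos hx,
      log_mul hx.ne' hy.ne, add_mul, exp_add, mul_assoc]

def rescale (m k : ℝ) (v : ℝ → ℝ) (r : ℝ) : ℝ :=
  k ^ (2 / (1 - m)) * v (k * r)

lemma rpow_two_div_one_sub_rpow_mul_sq {m k : ℝ} (hm : m ≠ 1) (hk : 0 < k) :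
    (k ^ (2 / (1 - m))) ^ m * k ^ 2 = k ^ (2 / (1 - m)) := by
  have h1m : 1 - m ≠ 0 := sub_ne_zero.2 hm.symm
  rw [← rpow_mul hk.le, ← rpow_natCast, ← rpow_add hk]
  congr 1
  field_simp
  push_cast
  ring

lemma deriv_comp_mul_left_const_mul (c k : ℝ) (f : ℝ → ℝ) :
    deriv (fun x => c * f (k * x)) = fun x => c * k * deriv f (k * x) := by
  funext x
  rw [deriv_const_mul_field, show (fun x => f (k * x)) = (f <| k * ·) from rfl,
    deriv_comp_mul_left, smul_eq_mul, mul_assoc]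

section Rescale

variable {n : ℕ} {m α β lam k : ℝ} {v : ℝ → ℝ}

lemma rescale_rpow_eventuallyEq (hk : 0 < k) (hpos : ∀ r, 0 ≤ r → 0 < v r) {r : ℝ}
    (hr : 0 < r) :
    (fun x => rescale m k v x ^ m) =ᶠ[𝓝 r]
      fun x => (k ^ (2 / (1 - m))) ^ m * (fun y => v y ^ m) (k * x) := by
  filter_upwards [isOpen_Ioi.mem_nhds hr] with x hx
  exact mul_rpow (by positivity) (hpos _ (mul_pos hk hx).le).le

lemma isRegularSolution_rescale (hm : m ≠ 1) (hk : 0 < k)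
    (hv : IsRegularSolution n m α β lam v) :
    IsRegularSolution n m α β (k ^ (2 / (1 - m)) * lam) (rescale m k v) := by
  obtain ⟨hcont, hpos, hsmooth, hv0, hflux, hode⟩ := hv
  have hc : 0 < k ^ (2 / (1 - m)) := by positivity
  have hmaps : MapsTo (k * ·) (Ici (0 : ℝ)) (Ici 0) := fun x hx => mul_nonneg hk.le hx
  have hder : ∀ r > 0, deriv (fun x => rescale m k v x ^ m) r
      = (k ^ (2 / (1 - m))) ^ m * k * deriv (fun y => v y ^ m) (k * r) := fun r hr => by
    rw [(rescale_rpow_eventuallyEq hk hpos hr).deriv_eq,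
      deriv_comp_mul_left_const_mul _ k fun y => v y ^ m]
  have hder2 : ∀ r > 0, deriv (deriv fun x => rescale m k v x ^ m) r
      = (k ^ (2 / (1 - m))) ^ m * k * k * deriv (deriv fun y => v y ^ m) (k * r) :=
    fun r hr => by
    rw [(rescale_rpow_eventuallyEq hk hpos hr).deriv.deriv_eq,
      deriv_comp_mul_left_const_mul _ k fun y => v y ^ m, deriv_comp_mul_left_const_mul]
  refine ⟨?_, fun r hr => mul_pos hc (hpos _ (hmaps hr)), ?_, ?_, ?_, fun r hr => ?_⟩
  · exact continuousOn_const.mul (hcont.comp (continuous_const_mul k).continuousOn hmaps)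
  · exact contDiffOn_const.mul (hsmooth.comp (contDiff_const.mul contDiff_id).contDiffOn
      fun x hx => mul_pos hk hx)
  · simp only [rescale, mul_zero, hv0]
  · have hmap : Tendsto (k * ·) (𝓝[>] (0 : ℝ)) (𝓝[>] 0) := by
      simpa using ((continuous_const_mul k).continuousWithinAt (x := 0)).tendsto_nhdsWithin
        (show MapsTo (k * ·) (Ioi (0 : ℝ)) (Ioi 0) from fun x hx => mul_pos hk hx)
    have h := (hflux.comp hmap).const_mul ((k ^ (2 / (1 - m))) ^ m * k / k ^ ((n : ℝ) - 1))
    rw [mul_zero] at h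
    refine h.congr' ?_
    filter_upwards [self_mem_nhdsWithin] with r hr
    rw [Function.comp_apply, hder r hr, mul_rpow hk.le (le_of_lt hr)]
    field_simp
  · rw [hder2 r hr, hder r hr, show rescale m k v = fun x => k ^ (2 / (1 - m)) * v (k * x) from rfl,
      deriv_comp_mul_left_const_mul]
    have hK := rpow_two_div_one_sub_rpow_mul_sq hm hk
    have := hode (k * r) (mul_pos hk hr)
    generalize k ^ (2 / (1 - m)) = c at hK ⊢
    generalize c ^ m = K at hK ⊢
    subst hK
    field_simp at this ⊢
    linear_combination (K * k) * this

end Rescale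

lemma tendsto_rescale_of_tendsto {m k γ C L : ℝ} {v : ℝ → ℝ} (hk : 0 < k)
    (h : Tendsto (fun r => r ^ γ * ((r ^ 2 / C) ^ (1 / (1 - m)) * v r - 1)) atTop (𝓝 L)) :
    Tendsto (fun r => r ^ γ * ((r ^ 2 / C) ^ (1 / (1 - m)) * rescale m k v r - 1)) atTop
      (𝓝 (k ^ (-γ) * L)) := by
  refine ((h.comp (tendsto_id.const_mul_atTop hk)).const_mul (k ^ (-γ))).congr' ?_
  filter_upwards [eventually_gt_atTop 0] with r hr
  have hscale : ((k * r) ^ 2 / C) ^ (1 / (1 - m))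
      = k ^ (2 / (1 - m)) * (r ^ 2 / C) ^ (1 / (1 - m)) := by
    rw [mul_pow, mul_div_assoc, mul_rpow_of_pos_left (by positivity), ← rpow_natCast,
      ← rpow_mul hk.le, Nat.cast_ofNat, mul_one_div]
  simp only [Function.comp_apply, id, rescale, hscale, mul_rpow hk.le hr.le, rpow_neg hk.le]
  field_simp

theorem stmt17_general (n : ℕ) (m ρ₁ lam₁ lam₂ β α B₁ B₂ : ℝ)
    (hm2 : m < ((n : ℝ) - 2) / n)
    (hlam₁ : 0 < lam₁) (hlam₂ : 0 < lam₂)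
    (v₁ v₂ : ℝ → ℝ)
    (hv₁ : IsRegularSolution n m α β lam₁ v₁)
    (hv₂ : IsRegularSolution n m α β lam₂ v₂)
    (hasym₁ : Tendsto (fun r =>
        r ^ gamma1 n m ρ₁ β *
          ((r ^ 2 / Cstar n m ρ₁) ^ (1 / (1 - m)) * v₁ r - 1))
      atTop (nhds (-B₁)))
    (hasym₂ : Tendsto (fun r =>
        r ^ gamma1 n m ρ₁ β *
          ((r ^ 2 / Cstar n m ρ₁) ^ (1 / (1 - m)) * v₂ r - 1))
      atTop (nhds (-B₂)))
    (huniq : ∀ lam > 0, ∀ v w : ℝ → ℝ,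
      IsRegularSolution n m α β lam v → IsRegularSolution n m α β lam w →
      ∀ r, 0 ≤ r → v r = w r) :
    B₂ = (lam₁ / lam₂) ^ ((1 - m) * gamma1 n m ρ₁ β / 2) * B₁ := by
  have hm1 : m < 1 := hm2.trans_le (div_le_one_of_le₀ (by linarith) n.cast_nonneg)
  have hq : 0 < lam₂ / lam₁ := div_pos hlam₂ hlam₁
  set k := (lam₂ / lam₁) ^ ((1 - m) / 2)
  have hk : 0 < k := rpow_pos_of_pos hq _
  have hk_pow : k ^ (2 / (1 - m)) * lam₁ = lam₂ := by
    rw [← rpow_mul hq.le, show (1 - m) / 2 * (2 / (1 - m)) = 1 by field_simp [(sub_pos.2 hm1).ne'],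
      rpow_one, div_mul_cancel₀ _ hlam₁.ne']
  have hw := isRegularSolution_rescale hm1.ne hk hv₁
  rw [hk_pow] at hw
  have hv₂_eq := huniq lam₂ hlam₂ v₂ (rescale m k v₁) hv₂ hw
  have hB : -B₂ = k ^ (-gamma1 n m ρ₁ β) * -B₁ := by
    refine tendsto_nhds_unique (hasym₂.congr' ?_) (tendsto_rescale_of_tendsto hk hasym₁)
    filter_upwards [eventually_ge_atTop 0] with r hr
    rw [hv₂_eq r hr]
  have hkγ : k ^ (-gamma1 n m ρ₁ β) = (lam₁ / lam₂) ^ ((1 - m) * gamma1 n m ρ₁ β / 2) := by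
    rw [← rpow_mul hq.le, ← inv_div lam₂ lam₁, inv_rpow hq.le, ← rpow_neg hq.le]
    ring_nf
  rw [← hkγ]
  linarith

/-- relation between the second-order asymptotic constants of two regular
solutions: `B_{λ₂} = (λ₁/λ₂)^{(1-m)γ₁/2} B_{λ₁}`. -/
theorem stmt17 (n : ℕ) (m ρ₁ lam₁ lam₂ β α B₁ B₂ : ℝ)
    (hn : 3 ≤ n) (hm : 0 < m) (hm2 : m < ((n : ℝ) - 2) / n)
    (hρ : 0 < ρ₁) (hlam₁ : 0 < lam₁) (hlam₂ : 0 < lam₂)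
    (hβ : β > ρ₁ / ((n : ℝ) - 2 - n * m))
    (hα : α = (2 * β + ρ₁) / (1 - m))
    (hA : Abeta n m ρ₁ β ^ 2 ≥ 8 * ((n : ℝ) - 2 - n * m) * (1 - m))
    (v₁ v₂ : ℝ → ℝ)
    (hv₁ : IsRegularSolution n m α β lam₁ v₁)
    (hv₂ : IsRegularSolution n m α β lam₂ v₂)
    (hasym₁ : Tendsto (fun r =>
        r ^ gamma1 n m ρ₁ β *
          ((r ^ 2 / Cstar n m ρ₁) ^ (1 / (1 - m)) * v₁ r - 1))
      atTop (nhds (-B₁)))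
    (hasym₂ : Tendsto (fun r =>
        r ^ gamma1 n m ρ₁ β *
          ((r ^ 2 / Cstar n m ρ₁) ^ (1 / (1 - m)) * v₂ r - 1))
      atTop (nhds (-B₂)))
    (huniq : ∀ lam > 0, ∀ v w : ℝ → ℝ,
      IsRegularSolution n m α β lam v → IsRegularSolution n m α β lam w →
      ∀ r, 0 ≤ r → v r = w r) :
    B₂ = (lam₁ / lam₂) ^ ((1 - m) * gamma1 n m ρ₁ β / 2) * B₁ :=
  stmt17_general n m ρ₁ lam₁ lam₂ β α B₁ B₂ hm2 hlam₁ hlam₂ v₁ v₂ hv₁ hv₂ hasym₁ hasym₂ huniq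
end
end
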